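/- Let K be the field of fractions of ℚ[x₀,x₁,x₂,x₃,x₄,x₅], set A = (x₂x₄+x₃x₅)/(x₀x₁), B = (x₁x₄+x₀x₅)/(x₂x₃), C = (x₀x₂+x₁x₃)/(x₄x₅), and let τ'₁, τ'₂, τ'₃ be the maps on K⁶ defined by: τ'₁ replaces (v₀,v₁) by ((v₂v₄+v₃v₅)/v₁, (v₂v₄+v₃v₅)/v₀); τ'₂ replaces (v₂,v₃) by ((v₁v₄+v₀v₅)/v₃, (v₁v₄+v₀v₅)/v₂); τ'₃ replaces (v₄,v₅) by ((v₀v₂+v₁v₃)/v₅, (v₀v₂+v₁v₃)/v₄); each fixes the remaining entries. For natural numbers s, t, let w be the word consisting of the block (1,2,3) repeated 2t+1 times, then the letter (1), then the block (3,2,1) repeated 2s times, and let v be the result of applying the maps to X = (x₀,…,x₅) in left-to-right order along w. Then v₀ = x₀·A^{3s²+3st+3t²+3s+6t+3}·B^{3s²+3st+3t²+4s+5t+2}·C^{3s²+3st+3t²+2s+4t+1} and v₁ = x₁ times the same monomial in A, B, C. -/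
import Mathlib


noncomputable section

/-- The polynomial ring ℚ[x₀,…,x₅]. -/
abbrev P : Type := MvPolynomial (Fin 6) ℚ

/-- K = Frac(ℚ[x₀,…,x₅]). -/
abbrev K : Type := FractionRing P

/-- The images of the variables x₀,…,x₅ in K. -/
def x (i : Fin 6) : K := algebraMap P K (MvPolynomial.X i)

/-- τ'₁ : replaces (v₀, v₁) by ((v₂v₄+v₃v₅)/v₁, (v₂v₄+v₃v₅)/v₀). -/
def tau1 (v : Fin 6 → K) : Fin 6 → K := fun k =>
  if k = 0 then (v 2 * v 4 + v 3 * v 5) / v 1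
  else if k = 1 then (v 2 * v 4 + v 3 * v 5) / v 0
  else v k

/-- τ'₂ : replaces (v₂, v₃) by ((v₁v₄+v₀v₅)/v₃, (v₁v₄+v₀v₅)/v₂). -/
def tau2 (v : Fin 6 → K) : Fin 6 → K := fun k =>
  if k = 2 then (v 1 * v 4 + v 0 * v 5) / v 3
  else if k = 3 then (v 1 * v 4 + v 0 * v 5) / v 2
  else v k

/-- τ'₃ : replaces (v₄, v₅) by ((v₀v₂+v₁v₃)/v₅, (v₀v₂+v₁v₃)/v₄). -/
def tau3 (v : Fin 6 → K) : Fin 6 → K := fun k =>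
  if k = 4 then (v 0 * v 2 + v 1 * v 3) / v 5
  else if k = 5 then (v 0 * v 2 + v 1 * v 3) / v 4
  else v k

/-- τ' indexed by Fin 3: `tau i` is τ'_{i+1}. -/
def tau : Fin 3 → (Fin 6 → K) → (Fin 6 → K)
  | 0 => tau1
  | 1 => tau2
  | 2 => tau3

/-- The initial labeled seed X = (x₀,…,x₅). -/
def X0 : Fin 6 → K := x

/-- Apply the maps τ'₍a₁₎, …, τ'₍aₙ₎ along the word `w` in left-to-right order. -/
def applyWord (w : List (Fin 3)) (v : Fin 6 → K) : Fin 6 → K :=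
  w.foldl (fun u a => tau a u) v

/-- A = (x₂x₄+x₃x₅)/(x₀x₁). -/
def A : K := (x 2 * x 4 + x 3 * x 5) / (x 0 * x 1)

/-- B = (x₁x₄+x₀x₅)/(x₂x₃). -/
def B : K := (x 1 * x 4 + x 0 * x 5) / (x 2 * x 3)

/-- C = (x₀x₂+x₁x₃)/(x₄x₅). -/
def C : K := (x 0 * x 2 + x 1 * x 3) / (x 4 * x 5)

/-- The canonical path (123)^{2t+1} (1) (321)^{2s} to the even alcove (3s, 3t+2)
(letters 1,2,3 are encoded as 0,1,2 in `Fin 3`). -/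
def word9 (s t : ℕ) : List (Fin 3) :=
  (List.replicate (2 * t + 1) ([0, 1, 2] : List (Fin 3))).flatten ++
    ([0] : List (Fin 3)) ++
    (List.replicate (2 * s) ([2, 1, 0] : List (Fin 3))).flatten

section AlcoveProof

open MvPolynomial in
lemma x_ne (i : Fin 6) : x i ≠ 0 := by
  simp only [x]
  rw [map_ne_zero_iff _ (IsFractionRing.injective P K)]
  exact MvPolynomial.X_ne_zero i

lemma poly_ne {p : P} (h : MvPolynomial.eval (fun _ => (1:ℚ)) p ≠ 0) :
    algebraMap P K p ≠ 0 := by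
  rw [map_ne_zero_iff _ (IsFractionRing.injective P K)]
  intro hp; exact h (by rw [hp]; simp)

lemma numA_ne : x 2 * x 4 + x 3 * x 5 ≠ 0 := by
  have := poly_ne (p := MvPolynomial.X 2 * MvPolynomial.X 4 + MvPolynomial.X 3 * MvPolynomial.X 5)
    (by simp)
  simpa [x, map_add, map_mul] using this

lemma numB_ne : x 1 * x 4 + x 0 * x 5 ≠ 0 := by
  have := poly_ne (p := MvPolynomial.X 1 * MvPolynomial.X 4 + MvPolynomial.X 0 * MvPolynomial.X 5)
    (by simp)
  simpa [x, map_add, map_mul] using this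

lemma numC_ne : x 0 * x 2 + x 1 * x 3 ≠ 0 := by
  have := poly_ne (p := MvPolynomial.X 0 * MvPolynomial.X 2 + MvPolynomial.X 1 * MvPolynomial.X 3)
    (by simp)
  simpa [x, map_add, map_mul] using this

lemma A_ne : A ≠ 0 := div_ne_zero numA_ne (mul_ne_zero (x_ne 0) (x_ne 1))
lemma B_ne : B ≠ 0 := div_ne_zero numB_ne (mul_ne_zero (x_ne 2) (x_ne 3))
lemma C_ne : C ≠ 0 := div_ne_zero numC_ne (mul_ne_zero (x_ne 4) (x_ne 5))

/-- The Laurent monomial A^a B^b C^c. -/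
def M (a b c : ℤ) : K := A ^ a * B ^ b * C ^ c

lemma M_ne (a b c : ℤ) : M a b c ≠ 0 :=
  mul_ne_zero (mul_ne_zero (zpow_ne_zero _ A_ne) (zpow_ne_zero _ B_ne)) (zpow_ne_zero _ C_ne)

lemma M_add (a b c d e f : ℤ) : M a b c * M d e f = M (a+d) (b+e) (c+f) := by
  simp only [M, zpow_add₀ A_ne, zpow_add₀ B_ne, zpow_add₀ C_ne]; ring

lemma keyA : x 2 * x 4 + x 3 * x 5 = x 0 * x 1 * M 1 0 0 := by
  have hM : M 1 0 0 = A := by simp [M]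
  rw [hM, A, eq_comm, mul_comm, div_mul_cancel₀ _ (mul_ne_zero (x_ne 0) (x_ne 1))]

lemma keyB : x 1 * x 4 + x 0 * x 5 = x 2 * x 3 * M 0 1 0 := by
  have hM : M 0 1 0 = B := by simp [M]
  rw [hM, B, eq_comm, mul_comm, div_mul_cancel₀ _ (mul_ne_zero (x_ne 2) (x_ne 3))]

lemma keyC : x 0 * x 2 + x 1 * x 3 = x 4 * x 5 * M 0 0 1 := by
  have hM : M 0 0 1 = C := by simp [M]
  rw [hM, C, eq_comm, mul_comm, div_mul_cancel₀ _ (mul_ne_zero (x_ne 4) (x_ne 5))]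

lemma main_div (y z : K) (hz : z ≠ 0) (a b c d e f : ℤ) :
    (y * z * M a b c) / (z * M d e f) = y * M (a-d) (b-e) (c-f) := by
  rw [div_eq_iff (mul_ne_zero hz (M_ne d e f))]
  have h := M_add (a-d) (b-e) (c-f) d e f
  simp only [sub_add_cancel] at h
  rw [← h]; ring

/-- Paired monomial state. -/
def St (v : Fin 6 → K) (pa pb pc qa qb qc ra rb rc : ℤ) : Prop :=
  v 0 = x 0 * M pa pb pc ∧ v 1 = x 1 * M pa pb pc ∧
  v 2 = x 2 * M qa qb qc ∧ v 3 = x 3 * M qa qb qc ∧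
  v 4 = x 4 * M ra rb rc ∧ v 5 = x 5 * M ra rb rc

lemma St_congr {v : Fin 6 → K} {pa pb pc qa qb qc ra rb rc pa' pb' pc' qa' qb' qc' ra' rb' rc' : ℤ}
    (h : St v pa pb pc qa qb qc ra rb rc)
    (e1 : pa' = pa) (e2 : pb' = pb) (e3 : pc' = pc)
    (e4 : qa' = qa) (e5 : qb' = qb) (e6 : qc' = qc)
    (e7 : ra' = ra) (e8 : rb' = rb) (e9 : rc' = rc) :
    St v pa' pb' pc' qa' qb' qc' ra' rb' rc' := by
  subst e1; subst e2; subst e3; subst e4; subst e5; subst e6; subst e7; subst e8; subst e9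
  exact h

lemma st1 {v : Fin 6 → K} {pa pb pc qa qb qc ra rb rc : ℤ}
    (h : St v pa pb pc qa qb qc ra rb rc) :
    St (tau1 v) ((1+qa+ra)-pa) ((qb+rb)-pb) ((qc+rc)-pc) qa qb qc ra rb rc := by
  obtain ⟨h0, h1, h2, h3, h4, h5⟩ := h
  have hnum : v 2 * v 4 + v 3 * v 5 = x 0 * x 1 * M (1+qa+ra) (qb+rb) (qc+rc) := by
    rw [h2, h3, h4, h5]
    calc x 2 * M qa qb qc * (x 4 * M ra rb rc) + x 3 * M qa qb qc * (x 5 * M ra rb rc)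
        = (x 2 * x 4 + x 3 * x 5) * (M qa qb qc * M ra rb rc) := by ring
      _ = (x 0 * x 1 * M 1 0 0) * (M qa qb qc * M ra rb rc) := by rw [keyA]
      _ = x 0 * x 1 * (M 1 0 0 * M qa qb qc * M ra rb rc) := by ring
      _ = x 0 * x 1 * M (1+qa+ra) (qb+rb) (qc+rc) := by
          rw [M_add, M_add]; norm_num
  refine ⟨?_, ?_, h2, h3, h4, h5⟩
  · show (v 2 * v 4 + v 3 * v 5) / v 1 = _
    rw [hnum, h1, main_div _ _ (x_ne 1)]
  · show (v 2 * v 4 + v 3 * v 5) / v 0 = _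
    rw [hnum, h0, show x 0 * x 1 = x 1 * x 0 by ring, main_div _ _ (x_ne 0)]

lemma st2 {v : Fin 6 → K} {pa pb pc qa qb qc ra rb rc : ℤ}
    (h : St v pa pb pc qa qb qc ra rb rc) :
    St (tau2 v) pa pb pc ((pa+ra)-qa) ((1+pb+rb)-qb) ((pc+rc)-qc) ra rb rc := by
  obtain ⟨h0, h1, h2, h3, h4, h5⟩ := h
  have hnum : v 1 * v 4 + v 0 * v 5 = x 2 * x 3 * M (pa+ra) (1+pb+rb) (pc+rc) := by
    rw [h0, h1, h4, h5]
    calc x 1 * M pa pb pc * (x 4 * M ra rb rc) + x 0 * M pa pb pc * (x 5 * M ra rb rc)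
        = (x 1 * x 4 + x 0 * x 5) * (M pa pb pc * M ra rb rc) := by ring
      _ = (x 2 * x 3 * M 0 1 0) * (M pa pb pc * M ra rb rc) := by rw [keyB]
      _ = x 2 * x 3 * (M 0 1 0 * M pa pb pc * M ra rb rc) := by ring
      _ = x 2 * x 3 * M (pa+ra) (1+pb+rb) (pc+rc) := by
          rw [M_add, M_add]; norm_num
  refine ⟨h0, h1, ?_, ?_, h4, h5⟩
  · show (v 1 * v 4 + v 0 * v 5) / v 3 = _
    rw [hnum, h3, show x 2 * x 3 = x 2 * x 3 by ring, main_div _ _ (x_ne 3)]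
  · show (v 1 * v 4 + v 0 * v 5) / v 2 = _
    rw [hnum, h2, show x 2 * x 3 = x 3 * x 2 by ring, main_div _ _ (x_ne 2)]

lemma st3 {v : Fin 6 → K} {pa pb pc qa qb qc ra rb rc : ℤ}
    (h : St v pa pb pc qa qb qc ra rb rc) :
    St (tau3 v) pa pb pc qa qb qc ((pa+qa)-ra) ((pb+qb)-rb) ((1+pc+qc)-rc) := by
  obtain ⟨h0, h1, h2, h3, h4, h5⟩ := h
  have hnum : v 0 * v 2 + v 1 * v 3 = x 4 * x 5 * M (pa+qa) (pb+qb) (1+pc+qc) := by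
    rw [h0, h1, h2, h3]
    calc x 0 * M pa pb pc * (x 2 * M qa qb qc) + x 1 * M pa pb pc * (x 3 * M qa qb qc)
        = (x 0 * x 2 + x 1 * x 3) * (M pa pb pc * M qa qb qc) := by ring
      _ = (x 4 * x 5 * M 0 0 1) * (M pa pb pc * M qa qb qc) := by rw [keyC]
      _ = x 4 * x 5 * (M 0 0 1 * M pa pb pc * M qa qb qc) := by ring
      _ = x 4 * x 5 * M (pa+qa) (pb+qb) (1+pc+qc) := by
          rw [M_add, M_add]; norm_num
  refine ⟨h0, h1, h2, h3, ?_, ?_⟩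
  · show (v 0 * v 2 + v 1 * v 3) / v 5 = _
    rw [hnum, h5, main_div _ _ (x_ne 5)]
  · show (v 0 * v 2 + v 1 * v 3) / v 4 = _
    rw [hnum, h4, show x 4 * x 5 = x 5 * x 4 by ring, main_div _ _ (x_ne 4)]

lemma rep_succ (n : ℕ) (l : List (Fin 3)) (v : Fin 6 → K) :
    applyWord ((List.replicate (n+1) l).flatten) v
      = applyWord l (applyWord ((List.replicate n l).flatten) v) := by
  rw [List.replicate_succ', List.flatten_append]
  simp [applyWord, List.foldl_append]

lemma apply012 (u : Fin 6 → K) : applyWord [0, 1, 2] u = tau3 (tau2 (tau1 u)) := rfl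

lemma apply210 (u : Fin 6 → K) : applyWord [2, 1, 0] u = tau1 (tau2 (tau3 u)) := rfl

lemma prefixSt (t : ℕ) :
    St (applyWord ((List.replicate (2*t+1) ([0, 1, 2] : List (Fin 3))).flatten) X0)
      (3*(t:ℤ)^2+3*t+1) (3*(t:ℤ)^2+2*t) (3*(t:ℤ)^2+t)
      (3*(t:ℤ)^2+4*t+1) (3*(t:ℤ)^2+3*t+1) (3*(t:ℤ)^2+2*t)
      (3*(t:ℤ)^2+5*t+2) (3*(t:ℤ)^2+4*t+1) (3*(t:ℤ)^2+3*t+1) := by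
  induction t with
  | zero =>
    have h0 : St X0 0 0 0 0 0 0 0 0 0 := by
      refine ⟨?_, ?_, ?_, ?_, ?_, ?_⟩ <;> simp [X0, M]
    have h := st3 (st2 (st1 h0))
    rw [show 2*0+1 = 1 by norm_num, rep_succ, show (List.replicate 0 ([0,1,2] : List (Fin 3))).flatten = [] from rfl,
      show applyWord [] X0 = X0 from rfl, apply012]
    exact St_congr h (by norm_num) (by norm_num) (by norm_num) (by norm_num) (by norm_num)
      (by norm_num) (by norm_num) (by norm_num) (by norm_num)
  | succ t ih =>
    rw [show 2*(t+1)+1 = (2*t+1)+1+1 by ring, rep_succ, rep_succ, apply012, apply012]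
    have h := st3 (st2 (st1 (st3 (st2 (st1 ih)))))
    exact St_congr h (by push_cast; ring) (by push_cast; ring) (by push_cast; ring)
      (by push_cast; ring) (by push_cast; ring) (by push_cast; ring)
      (by push_cast; ring) (by push_cast; ring) (by push_cast; ring)

lemma tailSt (t : ℕ) {u : Fin 6 → K}
    (h : St u (3*(t:ℤ)^2+6*t+3) (3*(t:ℤ)^2+5*t+2) (3*(t:ℤ)^2+4*t+1)
      (3*(t:ℤ)^2+4*t+1) (3*(t:ℤ)^2+3*t+1) (3*(t:ℤ)^2+2*t)
      (3*(t:ℤ)^2+5*t+2) (3*(t:ℤ)^2+4*t+1) (3*(t:ℤ)^2+3*t+1)) (s : ℕ) :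
    St (applyWord ((List.replicate (2*s) ([2, 1, 0] : List (Fin 3))).flatten) u)
      (3*(s:ℤ)^2+3*s*t+3*t^2+3*s+6*t+3) (3*(s:ℤ)^2+3*s*t+3*t^2+4*s+5*t+2)
      (3*(s:ℤ)^2+3*s*t+3*t^2+2*s+4*t+1)
      (3*(s:ℤ)^2+3*s*t+3*t^2+2*s+4*t+1) (3*(s:ℤ)^2+3*s*t+3*t^2+3*s+3*t+1)
      (3*(s:ℤ)^2+3*s*t+3*t^2+s+2*t)
      (3*(s:ℤ)^2+3*s*t+3*t^2+s+5*t+2) (3*(s:ℤ)^2+3*s*t+3*t^2+2*s+4*t+1)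
      (3*(s:ℤ)^2+3*s*t+3*t^2+3*t+1) := by
  induction s with
  | zero =>
    rw [show 2*0 = 0 by norm_num, show (List.replicate 0 ([2,1,0] : List (Fin 3))).flatten = [] from rfl,
      show applyWord [] u = u from rfl]
    exact St_congr h (by push_cast; ring) (by push_cast; ring) (by push_cast; ring)
      (by push_cast; ring) (by push_cast; ring) (by push_cast; ring)
      (by push_cast; ring) (by push_cast; ring) (by push_cast; ring)
  | succ s ih =>
    rw [show 2*(s+1) = (2*s)+1+1 by ring, rep_succ, rep_succ, apply210, apply210]
    have h' := st1 (st2 (st3 (st1 (st2 (st3 ih)))))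
    exact St_congr h' (by push_cast; ring) (by push_cast; ring) (by push_cast; ring)
      (by push_cast; ring) (by push_cast; ring) (by push_cast; ring)
      (by push_cast; ring) (by push_cast; ring) (by push_cast; ring)

end AlcoveProof

/-- Theorem 2.1, case |i| ≡ 0 mod 6, |j| ≡ 2 mod 3, i = 6s, j = 3t+2:
the vertex-0 and vertex-1 cluster variables at the corresponding even alcove. -/
theorem alcove_even_02 (s t : ℕ) :
    applyWord (word9 s t) X0 0 =
      x 0 * A ^ (3 * (s : ℤ) ^ 2 + 3 * s * t + 3 * t ^ 2 + 3 * s + 6 * t + 3)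
          * B ^ (3 * (s : ℤ) ^ 2 + 3 * s * t + 3 * t ^ 2 + 4 * s + 5 * t + 2)
          * C ^ (3 * (s : ℤ) ^ 2 + 3 * s * t + 3 * t ^ 2 + 2 * s + 4 * t + 1) ∧
    applyWord (word9 s t) X0 1 =
      x 1 * A ^ (3 * (s : ℤ) ^ 2 + 3 * s * t + 3 * t ^ 2 + 3 * s + 6 * t + 3)
          * B ^ (3 * (s : ℤ) ^ 2 + 3 * s * t + 3 * t ^ 2 + 4 * s + 5 * t + 2)
          * C ^ (3 * (s : ℤ) ^ 2 + 3 * s * t + 3 * t ^ 2 + 2 * s + 4 * t + 1) := by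
  have hmid := st1 (prefixSt t)
  have hmid' : St (tau1 (applyWord ((List.replicate (2*t+1) ([0, 1, 2] : List (Fin 3))).flatten) X0))
      (3*(t:ℤ)^2+6*t+3) (3*(t:ℤ)^2+5*t+2) (3*(t:ℤ)^2+4*t+1)
      (3*(t:ℤ)^2+4*t+1) (3*(t:ℤ)^2+3*t+1) (3*(t:ℤ)^2+2*t)
      (3*(t:ℤ)^2+5*t+2) (3*(t:ℤ)^2+4*t+1) (3*(t:ℤ)^2+3*t+1) := St_congr hmid (by push_cast; ring) (by push_cast; ring) (by push_cast; ring)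
    (by push_cast; ring) (by push_cast; ring) (by push_cast; ring)
    (by push_cast; ring) (by push_cast; ring) (by push_cast; ring)
  have ht := tailSt t hmid' s
  have htau : tau 0 = tau1 := rfl
  have hw : applyWord (word9 s t) X0
      = applyWord ((List.replicate (2*s) ([2, 1, 0] : List (Fin 3))).flatten)
          (tau1 (applyWord ((List.replicate (2*t+1) ([0, 1, 2] : List (Fin 3))).flatten) X0)) := by
    simp only [word9, applyWord, List.foldl_append, List.foldl_cons, List.foldl_nil, htau]
  obtain ⟨e0, e1, -, -, -, -⟩ := ht
  rw [hw]
  refine ⟨?_, ?_⟩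
  · rw [e0]; simp only [M]; ring
  · rw [e1]; simp only [M]; ring
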